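/- Let G be a D-regular Bonnet-Myers sharp graph of diameter L with pole x_0. For any two vertices x_1, x̄_1 ∈ S_1(x_0) which are neither equal nor adjacent, there exists a unique vertex x_2 ∈ S_2(x_0) adjacent to both x_1 and x̄_1. -/

import Mathlib

/-!
Write `ρ = dist x₀` and `K = 1 - 2D / (L (D + 1))`; sharpness says `W₁(μ_x, μ_y) ≤ K` on every
edge. Gluing transport plans through the uniform measure of the middle ball makes `W₁` satisfy the
triangle inequality, so `W₁(μ_a, μ_b) ≤ K · d(a, b)`, while the easy half of Kantorovich duality
bounds `W₁` from below by `𝔼_{μ_b} φ - 𝔼_{μ_a} φ` for every 1-Lipschitz potential `φ`.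

Let `p` be at distance `L` from `x₀` and `a` on an `x₀`–`p` geodesic. Applying both bounds to the
pairs `(x₀, a)` and `(p, a)` with the potentials `ρ` and `dist p` shows that `ρ + dist p`, which is
at least `L` everywhere, averages to at most `L` over `B₁(a)`: every neighbour of `a` is again on
a geodesic, and `ρ` is an optimal potential along each outward edge `a ~ b`.

For the edge `x₀ ~ x₁`, lowering `ρ` at `x̄₁` forces the mass of `μ_{x₀}` at `x̄₁` to flow to a
common neighbour of `x₁` and `x̄₁` in `S₂(x₀)`. For an edge `x₁ ~ y` with `y ∈ S₂(x₀)`, raising `ρ`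
on `{x₀, a, b}` shows that `y` has at most one neighbour in `S₁(x₀)` outside `B₁(x₁)`. By
regularity these far vertices of `S₁(x₀)` are exactly as many as the neighbours of `x₁` in
`S₂(x₀)`, so double counting upgrades "at least one common neighbour" to "exactly one".
-/

open Finset

namespace BMS

open scoped Classical

variable {V : Type*}

/-- The uniform probability measure on the closed 1-ball of `x` in a `D`-regular graph. -/
noncomputable def mu (G : SimpleGraph V) (D : ℕ) (x : V) : V → ℝ :=
  fun v => if G.dist x v ≤ 1 then 1 / (D + 1) else 0

/-- The L¹-Wasserstein distance between `μ_x` and `μ_y`, as an infimum over transport plans. -/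
noncomputable def W1 (G : SimpleGraph V) [Fintype V] (D : ℕ) (x y : V) : ℝ :=
  sInf { c : ℝ | ∃ π : V → V → ℝ,
    (∀ u v, 0 ≤ π u v) ∧
    (∀ u, ∑ v, π u v = mu G D x u) ∧
    (∀ v, ∑ u, π u v = mu G D y v) ∧
    c = ∑ u, ∑ v, (G.dist u v : ℝ) * π u v }

/-- Ollivier Ricci curvature (Lin–Lu–Yau normalization for regular graphs). -/
noncomputable def kappa (G : SimpleGraph V) [Fintype V] (D : ℕ) (x y : V) : ℝ :=
  ((D + 1) / D) * (1 - W1 G D x y)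

/-- `G` is Bonnet–Myers sharp: the infimum of the curvature over edges equals `2 / L`. -/
def BMSharp (G : SimpleGraph V) [Fintype V] (D L : ℕ) : Prop :=
  sInf { k : ℝ | ∃ x y, G.Adj x y ∧ k = kappa G D x y } = 2 / (L : ℝ)

/-- Number of neighbors of `y` at distance `k` from `x0`. -/
noncomputable def sphDeg (G : SimpleGraph V) [Fintype V] (x0 y : V) (k : ℕ) : ℕ :=
  (Finset.univ.filter (fun v => G.Adj y v ∧ G.dist x0 v = k)).card

/-- Number of triangles containing the edge `x ~ y` (common neighbors of `x` and `y`). -/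
noncomputable def tri (G : SimpleGraph V) [Fintype V] (x y : V) : ℕ :=
  (Finset.univ.filter (fun v => G.Adj x v ∧ G.Adj y v)).card

/-- A good optimal transport map from `B_1(a)` to `B_1(b)`: a bijection between the 1-balls,
fixing exactly the vertices of `B_1(a) ∩ B_1(b)` (among the domain), whose cost realizes
the Wasserstein distance `W1 (μ_a, μ_b)`. -/
def goodMap (G : SimpleGraph V) [Fintype V] (D : ℕ) (a b : V) (T : V → V) : Prop :=
  Set.BijOn T {v | G.dist a v ≤ 1} {v | G.dist b v ≤ 1} ∧
  (∀ v, G.dist a v ≤ 1 → (T v = v ↔ G.dist b v ≤ 1)) ∧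
  (1 / (D + 1 : ℝ)) *
      ∑ v ∈ Finset.univ.filter (fun v => G.dist a v ≤ 1), (G.dist v (T v) : ℝ) =
    W1 G D a b


noncomputable def mean (G : SimpleGraph V) [Fintype V] (D : ℕ) (a : V) (φ : V → ℕ) : ℝ :=
  ∑ v, mu G D a v * φ v

section Measures

variable {G : SimpleGraph V} {D : ℕ}

lemma dist_le_one_iff (hconn : G.Connected) {x v : V} : G.dist x v ≤ 1 ↔ v = x ∨ G.Adj x v := by
  rw [Nat.le_one_iff_eq_zero_or_eq_one, hconn.dist_eq_zero_iff, SimpleGraph.dist_eq_one_iff_adj,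
    eq_comm]

lemma one_lt_dist_iff (hconn : G.Connected) {x v : V} : 1 < G.dist x v ↔ x ≠ v ∧ ¬ G.Adj x v := by
  rw [← not_le, dist_le_one_iff hconn, eq_comm]
  tauto

lemma mu_of_dist_le_one {x v : V} (h : G.dist x v ≤ 1) : mu G D x v = 1 / (D + 1) :=
  if_pos h

lemma mu_of_one_lt_dist {x v : V} (h : 1 < G.dist x v) : mu G D x v = 0 :=
  if_neg h.not_ge

lemma mu_nonneg (x v : V) : 0 ≤ mu G D x v := by
  unfold mu; split <;> positivity

lemma mu_le (x v : V) : mu G D x v ≤ 1 / (D + 1) := by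
  unfold mu; split
  · rfl
  · positivity

variable [Fintype V]

lemma sum_mu_mul (hconn : G.Connected) (x : V) (f : V → ℝ) :
    ∑ v, mu G D x v * f v = (f x + ∑ w ∈ G.neighborFinset x, f w) / (D + 1) := by
  have hball : ({v | G.dist x v ≤ 1} : Finset V) = insert x (G.neighborFinset x) := by
    ext v; simp [dist_le_one_iff hconn]
  simp only [mu, ite_mul, zero_mul, Finset.sum_ite, Finset.sum_const_zero, add_zero, hball,
    Finset.sum_insert (G.notMem_neighborFinset_self x), ← Finset.mul_sum, ← mul_add]
  ring

lemma sum_mu (hconn : G.Connected) (hreg : G.IsRegularOfDegree D) (x : V) :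
    ∑ v, mu G D x v = 1 := by
  simpa [G.card_neighborFinset_eq_degree, hreg x, add_comm (1 : ℝ), Nat.cast_add_one_ne_zero]
    using sum_mu_mul (D := D) hconn x fun _ => 1

lemma mean_dist_self (hconn : G.Connected) (hreg : G.IsRegularOfDegree D) (x : V) :
    mean G D x (G.dist x) = D / (D + 1) := by
  have hnbr : ∀ w ∈ G.neighborFinset x, ((G.dist x w : ℕ) : ℝ) = 1 := fun w hw => by
    simp [SimpleGraph.dist_eq_one_iff_adj.mpr ((G.mem_neighborFinset x w).mp hw)]
  rw [mean, sum_mu_mul hconn, Finset.sum_congr rfl hnbr]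
  simp [G.card_neighborFinset_eq_degree, hreg x]

lemma mean_const (hconn : G.Connected) (hreg : G.IsRegularOfDegree D) (a : V) (n : ℕ) :
    mean G D a (fun _ => n) = n := by
  rw [mean, ← Finset.sum_mul, sum_mu hconn hreg, one_mul]

lemma mean_add (a : V) (φ ψ : V → ℕ) :
    mean G D a (fun v => φ v + ψ v) = mean G D a φ + mean G D a ψ := by
  simp only [mean, Nat.cast_add, mul_add, Finset.sum_add_distrib]

lemma mean_add_indicator (a : V) (φ : V → ℕ) (S : Finset V) :
    mean G D a (fun v => φ v + if v ∈ S then 1 else 0) = mean G D a φ + ∑ v ∈ S, mu G D a v := by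
  rw [mean_add]
  simp [mean, Finset.sum_ite_mem]

lemma mean_mono {a : V} {φ ψ : V → ℕ} (h : ∀ v, G.dist a v ≤ 1 → φ v ≤ ψ v) :
    mean G D a φ ≤ mean G D a ψ := by
  refine Finset.sum_le_sum fun v _ => ?_
  by_cases hv : G.dist a v ≤ 1
  · exact mul_le_mul_of_nonneg_left (by exact_mod_cast h v hv) (mu_nonneg a v)
  · simp [mu, hv]

end Measures

def IsPlan (G : SimpleGraph V) [Fintype V] (D : ℕ) (a b : V) (π : V → V → ℝ) : Prop :=
  (∀ u v, 0 ≤ π u v) ∧ (∀ u, ∑ v, π u v = mu G D a u) ∧ (∀ v, ∑ u, π u v = mu G D b v)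

noncomputable def cost (G : SimpleGraph V) [Fintype V] (π : V → V → ℝ) : ℝ :=
  ∑ u, ∑ v, (G.dist u v : ℝ) * π u v

/-- Composition of plans through the uniform measure `μ_b`, whose density `1 / (D + 1)` on the
ball is divided out. -/
noncomputable def glue [Fintype V] (D : ℕ) (π₁ π₂ : V → V → ℝ) : V → V → ℝ :=
  fun u w => (D + 1) * ∑ v, π₁ u v * π₂ v w

section Plans

variable [Fintype V] {G : SimpleGraph V} {D : ℕ} {a b c : V} {π π₁ π₂ : V → V → ℝ}

lemma W1_eq_sInf : W1 G D a b = sInf {x | ∃ π, IsPlan G D a b π ∧ x = cost G π} := by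
  simp only [W1, IsPlan, cost, and_assoc]

lemma IsPlan.eq_zero_of_mu_right (hπ : IsPlan G D a b π) {v : V} (h : mu G D b v = 0) (u : V) :
    π u v = 0 :=
  (Finset.sum_eq_zero_iff_of_nonneg fun u _ => hπ.1 u v).mp ((hπ.2.2 v).trans h) u
    (Finset.mem_univ u)

lemma IsPlan.eq_zero_of_mu_left (hπ : IsPlan G D a b π) {u : V} (h : mu G D a u = 0) (v : V) :
    π u v = 0 :=
  (Finset.sum_eq_zero_iff_of_nonneg fun v _ => hπ.1 u v).mp ((hπ.2.1 u).trans h) v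
    (Finset.mem_univ v)

lemma IsPlan.mul_mu_right (hπ : IsPlan G D a b π) (u v : V) :
    (D + 1) * (π u v * mu G D b v) = π u v := by
  by_cases h : G.dist b v ≤ 1
  · rw [mu_of_dist_le_one h]; field_simp
  · rw [hπ.eq_zero_of_mu_right (mu_of_one_lt_dist (not_le.mp h)) u]; ring

lemma IsPlan.mul_mu_left (hπ : IsPlan G D a b π) (u v : V) :
    (D + 1) * (mu G D a u * π u v) = π u v := by
  by_cases h : G.dist a u ≤ 1
  · rw [mu_of_dist_le_one h]; field_simp
  · rw [hπ.eq_zero_of_mu_left (mu_of_one_lt_dist (not_le.mp h)) v]; ring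

lemma isPlan_prod (hconn : G.Connected) (hreg : G.IsRegularOfDegree D) (a b : V) :
    IsPlan G D a b fun u v => mu G D a u * mu G D b v :=
  ⟨fun u v => mul_nonneg (mu_nonneg a u) (mu_nonneg b v),
    fun u => by rw [← Finset.mul_sum, sum_mu hconn hreg, mul_one],
    fun v => by rw [← Finset.sum_mul, sum_mu hconn hreg, one_mul]⟩

lemma isPlan_diag (a : V) : IsPlan G D a a fun u v => if u = v then mu G D a u else 0 :=
  ⟨fun u v => by dsimp only; split <;> simp [mu_nonneg], fun u => by simp, fun v => by simp⟩

lemma cost_diag (a : V) : cost G (fun u v => if u = v then mu G D a u else 0) = 0 := by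
  simp [cost]

lemma plan_costs_nonempty (hconn : G.Connected) (hreg : G.IsRegularOfDegree D) (a b : V) :
    {x | ∃ π, IsPlan G D a b π ∧ x = cost G π}.Nonempty :=
  ⟨_, _, isPlan_prod hconn hreg a b, rfl⟩

lemma W1_le_cost (hπ : IsPlan G D a b π) : W1 G D a b ≤ cost G π := by
  rw [W1_eq_sInf]
  refine csInf_le ⟨0, ?_⟩ ⟨π, hπ, rfl⟩
  rintro _ ⟨π', hπ', rfl⟩
  exact Finset.sum_nonneg fun u _ => Finset.sum_nonneg fun v _ =>
    mul_nonneg (Nat.cast_nonneg _) (hπ'.1 u v)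

lemma exists_plan_cost_lt (hconn : G.Connected) (hreg : G.IsRegularOfDegree D) (a b : V)
    {ε : ℝ} (hε : 0 < ε) : ∃ π, IsPlan G D a b π ∧ cost G π < W1 G D a b + ε := by
  obtain ⟨_, ⟨π, hπ, rfl⟩, hlt⟩ := Real.lt_sInf_add_pos (plan_costs_nonempty hconn hreg a b) hε
  exact ⟨π, hπ, by rwa [W1_eq_sInf]⟩

lemma W1_self_nonpos (a : V) : W1 G D a a ≤ 0 :=
  (W1_le_cost (isPlan_diag a)).trans (cost_diag a).le

lemma mean_sub_mean_le_cost {φ : V → ℕ} (hφ : ∀ u v, φ v ≤ φ u + G.dist u v)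
    (hπ : IsPlan G D a b π) : mean G D b φ - mean G D a φ ≤ cost G π := by
  have hb : mean G D b φ = ∑ u, ∑ v, π u v * φ v := by
    rw [mean, Finset.sum_comm]
    exact Finset.sum_congr rfl fun v _ => by rw [← hπ.2.2 v, Finset.sum_mul]
  have ha : mean G D a φ = ∑ u, ∑ v, π u v * φ u :=
    Finset.sum_congr rfl fun u _ => by rw [← hπ.2.1 u, Finset.sum_mul]
  rw [hb, ha, cost, ← Finset.sum_sub_distrib]
  refine Finset.sum_le_sum fun u _ => ?_
  rw [← Finset.sum_sub_distrib]
  refine Finset.sum_le_sum fun v _ => ?_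
  have h : (φ v : ℝ) - φ u ≤ G.dist u v := by
    have := hφ u v
    rw [sub_le_iff_le_add']
    exact_mod_cast this
  nlinarith [hπ.1 u v]

lemma mean_sub_mean_le_W1 (hconn : G.Connected) (hreg : G.IsRegularOfDegree D) {φ : V → ℕ}
    (hφ : ∀ u v, φ v ≤ φ u + G.dist u v) (a b : V) :
    mean G D b φ - mean G D a φ ≤ W1 G D a b := by
  rw [W1_eq_sInf]
  refine le_csInf (plan_costs_nonempty hconn hreg a b) ?_
  rintro _ ⟨π, hπ, rfl⟩
  exact mean_sub_mean_le_cost hφ hπ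

lemma isPlan_glue (hπ₁ : IsPlan G D a b π₁) (hπ₂ : IsPlan G D b c π₂) :
    IsPlan G D a c (glue D π₁ π₂) := by
  refine ⟨fun u w => ?_, fun u => ?_, fun w => ?_⟩
  · exact mul_nonneg (by positivity)
      (Finset.sum_nonneg fun v _ => mul_nonneg (hπ₁.1 u v) (hπ₂.1 v w))
  · simp_rw [glue, ← Finset.mul_sum]
    rw [Finset.sum_comm]
    simp_rw [← Finset.mul_sum, hπ₂.2.1, Finset.mul_sum, hπ₁.mul_mu_right, hπ₁.2.1]
  · simp_rw [glue, ← Finset.mul_sum]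
    rw [Finset.sum_comm]
    simp_rw [← Finset.sum_mul, hπ₁.2.2, Finset.mul_sum, hπ₂.mul_mu_left, hπ₂.2.2]

lemma cost_glue_le (hconn : G.Connected) (hπ₁ : IsPlan G D a b π₁) (hπ₂ : IsPlan G D b c π₂) :
    cost G (glue D π₁ π₂) ≤ cost G π₁ + cost G π₂ := by
  have h₁ : ∑ u, ∑ v, ∑ w, (D + 1) * (G.dist u v * (π₁ u v * π₂ v w)) = cost G π₁ := by
    refine Finset.sum_congr rfl fun u _ => Finset.sum_congr rfl fun v _ => ?_
    simp_rw [← Finset.mul_sum, hπ₂.2.1]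
    linear_combination (G.dist u v : ℝ) * hπ₁.mul_mu_right u v
  have h₂ : ∑ u, ∑ v, ∑ w, (D + 1) * (G.dist v w * (π₁ u v * π₂ v w)) = cost G π₂ := by
    rw [Finset.sum_comm]
    refine Finset.sum_congr rfl fun v _ => ?_
    rw [Finset.sum_comm]
    refine Finset.sum_congr rfl fun w _ => ?_
    have h : ∀ u, (D + 1) * (G.dist v w * (π₁ u v * π₂ v w)) =
        (D + 1) * G.dist v w * π₂ v w * π₁ u v := fun u => by ring
    simp_rw [h, ← Finset.mul_sum, hπ₁.2.2]
    linear_combination (G.dist v w : ℝ) * hπ₂.mul_mu_left v w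
  calc cost G (glue D π₁ π₂)
      = ∑ u, ∑ v, ∑ w, (D + 1) * (G.dist u w * (π₁ u v * π₂ v w)) := by
        simp_rw [cost, glue, Finset.mul_sum]
        refine Finset.sum_congr rfl fun u _ => ?_
        rw [Finset.sum_comm]
        refine Finset.sum_congr rfl fun v _ => Finset.sum_congr rfl fun w _ => ?_
        ring
    _ ≤ ∑ u, ∑ v, ∑ w, (D + 1) * ((G.dist u v + G.dist v w) * (π₁ u v * π₂ v w)) := by
        gcongr with u _ v _ w _
        · exact mul_nonneg (hπ₁.1 u v) (hπ₂.1 v w)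
        · exact_mod_cast hconn.dist_triangle
    _ = cost G π₁ + cost G π₂ := by
        rw [← h₁, ← h₂, ← Finset.sum_add_distrib]
        simp_rw [← Finset.sum_add_distrib]
        refine Finset.sum_congr rfl fun u _ => Finset.sum_congr rfl fun v _ =>
          Finset.sum_congr rfl fun w _ => ?_
        ring

lemma W1_triangle (hconn : G.Connected) (hreg : G.IsRegularOfDegree D) (a b c : V) :
    W1 G D a c ≤ W1 G D a b + W1 G D b c := by
  refine le_of_forall_pos_lt_add fun ε hε => ?_
  obtain ⟨π₁, hπ₁, h₁⟩ := exists_plan_cost_lt hconn hreg a b (half_pos hε)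
  obtain ⟨π₂, hπ₂, h₂⟩ := exists_plan_cost_lt hconn hreg b c (half_pos hε)
  have := W1_le_cost (isPlan_glue hπ₁ hπ₂)
  have := cost_glue_le hconn hπ₁ hπ₂
  linarith

lemma W1_le_mul_dist (hconn : G.Connected) (hreg : G.IsRegularOfDegree D) {K : ℝ}
    (hK : ∀ x y, G.Adj x y → W1 G D x y ≤ K) (a b : V) : W1 G D a b ≤ K * G.dist a b := by
  suffices h : ∀ {x y : V} (p : G.Walk x y), W1 G D x y ≤ K * p.length by
    obtain ⟨p, hp⟩ := hconn.exists_walk_length_eq_dist a b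
    simpa [hp] using h p
  intro x y p
  induction p with
  | nil => simpa using W1_self_nonpos _
  | @cons x y z hxy p ih =>
    rw [SimpleGraph.Walk.length_cons, Nat.cast_succ]
    linarith [hK x y hxy, W1_triangle hconn hreg x y z]

end Plans

noncomputable def sharpEdgeW1 (D L : ℕ) : ℝ := 1 - 2 * D / (L * (D + 1))

section Sharp

variable [Fintype V] {G : SimpleGraph V} {D L : ℕ}

lemma W1_le_sharpEdgeW1 (hBM : BMSharp G D L) (hD : 0 < D) {x y : V} (hxy : G.Adj x y) :
    W1 G D x y ≤ sharpEdgeW1 D L := by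
  have hbdd : BddBelow {k : ℝ | ∃ x y, G.Adj x y ∧ k = kappa G D x y} :=
    ((Set.finite_range fun p : V × V => kappa G D p.1 p.2).subset
      (by rintro _ ⟨x, y, -, rfl⟩; exact ⟨(x, y), rfl⟩)).bddBelow
  have hκ : 2 / (L : ℝ) ≤ kappa G D x y := hBM ▸ csInf_le hbdd ⟨x, y, hxy, rfl⟩
  have hD' : (0 : ℝ) < D := by exact_mod_cast hD
  have h₁ : 1 - W1 G D x y = D / (D + 1) * kappa G D x y := by
    unfold kappa; field_simp
  have h₂ : 2 * (D : ℝ) / (L * (D + 1)) = D / (D + 1) * (2 / L) := by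
    rw [div_mul_div_comm, mul_comm (D : ℝ), mul_comm (L : ℝ)]
  rw [sharpEdgeW1, h₂]
  linarith [mul_le_mul_of_nonneg_left hκ (by positivity : (0 : ℝ) ≤ D / (D + 1))]

lemma sharpEdgeW1_mul_add (hL : 0 < L) {m n : ℕ} (h : m + n = L) :
    sharpEdgeW1 D L * m + sharpEdgeW1 D L * n = L - 2 * (D / (D + 1)) := by
  rw [← mul_add, ← Nat.cast_add, h, sharpEdgeW1]
  field_simp

lemma mean_dist_le (hconn : G.Connected) (hreg : G.IsRegularOfDegree D) (hBM : BMSharp G D L)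
    (hD : 0 < D) (x a : V) :
    mean G D a (G.dist x) ≤ D / (D + 1) + sharpEdgeW1 D L * G.dist x a := by
  have h₁ := mean_sub_mean_le_W1 hconn hreg (φ := G.dist x) (fun _ _ => hconn.dist_triangle) x a
  have h₂ := W1_le_mul_dist hconn hreg (fun _ _ => W1_le_sharpEdgeW1 hBM hD) x a
  rw [mean_dist_self hconn hreg] at h₁
  linarith

end Sharp

section Geodesic

variable {G : SimpleGraph V} {D L : ℕ} {x₀ p a : V}

lemma le_dist_add_dist (hconn : G.Connected) (hp : G.dist x₀ p = L) (v : V) :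
    L ≤ G.dist x₀ v + G.dist p v := by
  rw [← hp, G.dist_comm (u := p)]
  exact hconn.dist_triangle

variable [Fintype V]

lemma mean_dist_add_mean_dist_le (hconn : G.Connected) (hreg : G.IsRegularOfDegree D)
    (hBM : BMSharp G D L) (hD : 0 < D) (hL : 0 < L) (ha : G.dist x₀ a + G.dist a p = L) :
    mean G D a (G.dist x₀) + mean G D a (G.dist p) ≤ L := by
  have h₀ := mean_dist_le hconn hreg hBM hD x₀ a
  have h₁ := mean_dist_le hconn hreg hBM hD p a
  have hK := sharpEdgeW1_mul_add (D := D) hL (G.dist_comm (u := p) ▸ ha)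
  linarith

lemma dist_add_dist_of_adj (hconn : G.Connected) (hreg : G.IsRegularOfDegree D)
    (hBM : BMSharp G D L) (hD : 0 < D) (hL : 0 < L) (hp : G.dist x₀ p = L)
    (ha : G.dist x₀ a + G.dist a p = L) {v : V} (hv : G.Adj a v) :
    G.dist x₀ v + G.dist v p = L := by
  by_contra hne
  have hpt : ∀ w, G.dist a w ≤ 1 →
      L + (if w ∈ ({v} : Finset V) then 1 else 0) ≤ G.dist x₀ w + G.dist p w := by
    intro w _
    have := le_dist_add_dist hconn hp w
    split_ifs with hw
    · rw [Finset.mem_singleton] at hw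
      subst hw
      rw [G.dist_comm (u := p)] at this ⊢
      omega
    · omega
  have hmean := mean_mono (D := D) (φ := fun w => L + if w ∈ ({v} : Finset V) then 1 else 0)
    (ψ := fun w => G.dist x₀ w + G.dist p w) hpt
  rw [mean_add_indicator, mean_const hconn hreg, Finset.sum_singleton,
    mu_of_dist_le_one (SimpleGraph.dist_eq_one_iff_adj.mpr hv).le, mean_add] at hmean
  have := mean_dist_add_mean_dist_le hconn hreg hBM hD hL ha
  have : (0 : ℝ) < 1 / (D + 1) := by positivity
  linarith

lemma mean_dist_eq (hconn : G.Connected) (hreg : G.IsRegularOfDegree D) (hBM : BMSharp G D L)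
    (hD : 0 < D) (hL : 0 < L) (hp : G.dist x₀ p = L) (ha : G.dist x₀ a + G.dist a p = L) :
    mean G D a (G.dist x₀) = D / (D + 1) + sharpEdgeW1 D L * G.dist x₀ a := by
  refine le_antisymm (mean_dist_le hconn hreg hBM hD x₀ a) ?_
  have h₀ : (L : ℝ) ≤ mean G D a (G.dist x₀) + mean G D a (G.dist p) := by
    rw [← mean_add, ← mean_const hconn hreg a L]
    exact mean_mono fun w _ => le_dist_add_dist hconn hp w
  have h₁ := mean_dist_le hconn hreg hBM hD p a
  have hK := sharpEdgeW1_mul_add (D := D) hL (G.dist_comm (u := p) ▸ ha)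
  linarith

lemma W1_le_mean_sub_mean (hconn : G.Connected) (hreg : G.IsRegularOfDegree D)
    (hBM : BMSharp G D L) (hD : 0 < D) (hL : 0 < L) (hp : G.dist x₀ p = L)
    (ha : G.dist x₀ a + G.dist a p = L) {b : V} (hab : G.Adj a b)
    (hb : G.dist x₀ b = G.dist x₀ a + 1) :
    W1 G D a b ≤ mean G D b (G.dist x₀) - mean G D a (G.dist x₀) := by
  rw [mean_dist_eq hconn hreg hBM hD hL hp (dist_add_dist_of_adj hconn hreg hBM hD hL hp ha hab),
    mean_dist_eq hconn hreg hBM hD hL hp ha, hb]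
  push_cast
  linarith [W1_le_sharpEdgeW1 hBM hD hab]

end Geodesic

section Tight

variable {G : SimpleGraph V} {D : ℕ} {x₀ : V}

lemma lipschitz_add_indicator {φ : V → ℕ} (hφ : ∀ u v, φ v ≤ φ u + G.dist u v) {S : Finset V}
    (hS : ∀ v ∈ S, ∀ u ∉ S, φ v < φ u + G.dist u v) (u v : V) :
    φ v + (if v ∈ S then 1 else 0) ≤ (φ u + if u ∈ S then 1 else 0) + G.dist u v := by
  have := hφ u v
  split_ifs with hv hu hu
  · omega
  · have := hS v hv u hu
    omega
  · omega
  · omega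

variable [Fintype V]

lemma exists_common_neighbor_of_tight (hconn : G.Connected) (hreg : G.IsRegularOfDegree D)
    {u u' : V} (hu : G.dist x₀ u = 1) (hu' : G.dist x₀ u' = 1) (huu' : 1 < G.dist u u')
    (htight : W1 G D x₀ u ≤ mean G D u (G.dist x₀) - mean G D x₀ (G.dist x₀)) :
    ∃ y, G.dist x₀ y = 2 ∧ G.Adj u y ∧ G.Adj u' y := by
  by_contra hno
  simp only [not_exists, not_and] at hno
  -- on `B_1(x₀)` this is `dist x₀` lowered by one at `u'` only; on `B_1(u)` it is `dist x₀`
  set ψ : V → ℕ := fun v => min (G.dist x₀ v) (G.dist u' v) with hψ_def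
  have hψ : ∀ v w, ψ w ≤ ψ v + G.dist v w := fun v w => by
    have := hconn.dist_triangle (u := x₀) (v := v) (w := w)
    have := hconn.dist_triangle (u := u') (v := v) (w := w)
    simp only [hψ_def]
    omega
  have hball : ∀ v, G.dist u v ≤ 1 → G.dist x₀ v ≤ ψ v := by
    intro v hv
    simp only [hψ_def, le_min_iff, le_refl, true_and]
    rcases (dist_le_one_iff hconn).1 hv with rfl | huv
    · rw [hu, G.dist_comm]
      exact huu'.le
    · have h₁ := hconn.dist_triangle (u := x₀) (v := u) (w := v)
      have h₂ := hconn.dist_triangle (u := x₀) (v := u') (w := v)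
      have hv₁ := SimpleGraph.dist_eq_one_iff_adj.mpr huv
      have hvu' : G.dist u' v ≠ 0 := by
        intro h
        rw [(hconn.dist_eq_zero_iff).mp h] at huu'
        omega
      by_contra hlt
      exact hno v (by omega) huv (SimpleGraph.dist_eq_one_iff_adj.mp (by omega))
  have hx₀ : ∀ v, G.dist x₀ v ≤ 1 →
      ψ v + (if v ∈ ({u'} : Finset V) then 1 else 0) ≤ G.dist x₀ v := by
    intro v _
    split_ifs with hv
    · rw [Finset.mem_singleton] at hv
      subst hv
      simp [hψ_def, hu']
    · simp [hψ_def]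
  have h₁ := mean_mono (D := D) hball
  have h₂ := mean_mono (D := D) hx₀
  rw [mean_add_indicator, Finset.sum_singleton, mu_of_dist_le_one hu'.le] at h₂
  have h₃ := mean_sub_mean_le_W1 hconn hreg hψ x₀ u
  have : (0 : ℝ) < 1 / (D + 1) := by positivity
  linarith

lemma eq_of_adj_of_tight (hconn : G.Connected) (hreg : G.IsRegularOfDegree D) {u y a b : V}
    (hy : 1 < G.dist x₀ y) (ha : G.dist x₀ a = 1) (hb : G.dist x₀ b = 1) (hua : 1 < G.dist u a)
    (hub : 1 < G.dist u b) (hay : G.Adj a y) (hby : G.Adj b y)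
    (htight : W1 G D u y ≤ mean G D y (G.dist x₀) - mean G D u (G.dist x₀)) : a = b := by
  by_contra hab
  have hx₀a : x₀ ∉ ({a, b} : Finset V) := by
    simp only [Finset.mem_insert, Finset.mem_singleton, not_or]
    constructor <;> rintro rfl <;> simp_all
  -- raising `dist x₀` by one on `S` gains `2 / (D + 1)` on `μ_y` and at most `1 / (D + 1)` on `μ_u`
  set S : Finset V := insert x₀ {a, b} with hS_def
  have hS : ∀ v ∈ S, ∀ w ∉ S, G.dist x₀ v < G.dist x₀ w + G.dist w v := by
    intro v hv w hw
    have hwv : G.dist w v ≠ 0 := fun h => hw ((hconn.dist_eq_zero_iff.mp h) ▸ hv)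
    have hw₀ : G.dist x₀ w ≠ 0 := fun h => hw ((hconn.dist_eq_zero_iff.mp h) ▸ by simp [hS_def])
    simp only [hS_def, Finset.mem_insert, Finset.mem_singleton] at hv
    rcases hv with rfl | rfl | rfl <;> simp only [SimpleGraph.dist_self, ha, hb] <;> omega
  have hψ := lipschitz_add_indicator (fun _ _ => hconn.dist_triangle) hS
  have hdual := mean_sub_mean_le_W1 hconn hreg
    (φ := fun v => G.dist x₀ v + if v ∈ S then 1 else 0) hψ u y
  rw [mean_add_indicator, mean_add_indicator] at hdual
  have hSy : ∑ v ∈ S, mu G D y v = 2 / (D + 1) := by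
    rw [hS_def, Finset.sum_insert hx₀a, Finset.sum_pair hab,
      mu_of_one_lt_dist (G.dist_comm ▸ hy),
      mu_of_dist_le_one (SimpleGraph.dist_eq_one_iff_adj.mpr hay.symm).le,
      mu_of_dist_le_one (SimpleGraph.dist_eq_one_iff_adj.mpr hby.symm).le]
    ring
  have hSu : ∑ v ∈ S, mu G D u v ≤ 1 / (D + 1) := by
    rw [hS_def, Finset.sum_insert hx₀a, Finset.sum_pair hab, mu_of_one_lt_dist hua,
      mu_of_one_lt_dist hub, add_zero, add_zero]
    exact mu_le u x₀
  have : (0 : ℝ) < 1 / (D + 1) := by positivity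
  have : (2 : ℝ) / (D + 1) = 1 / (D + 1) + 1 / (D + 1) := by ring
  linarith

end Tight

section Counting

variable [Fintype V] {G : SimpleGraph V} {D : ℕ} {x₀ u : V}

/-- Both sides equal `D - #(S_1(x₀) ∩ B_1(u))`: split `S_1(x₀) = N(x₀)` by membership in `B_1(u)`,
and `B_1(u)` by the distance from `x₀`, which is 0, 1 or 2 there. -/
lemma card_far_eq_card_out (hconn : G.Connected) (hreg : G.IsRegularOfDegree D)
    (hu : G.dist x₀ u = 1) :
    #{v | G.dist x₀ v = 1 ∧ 1 < G.dist u v} = #{v | G.dist x₀ v = 2 ∧ G.Adj u v} := by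
  set B : Finset V := {v | G.dist u v ≤ 1} with hB_def
  set S₁ : Finset V := {v | G.dist x₀ v = 1} with hS₁_def
  have hB : #B = D + 1 := by
    have : B = insert u (G.neighborFinset u) := by ext v; simp [hB_def, dist_le_one_iff hconn]
    rw [this, card_insert_of_notMem (G.notMem_neighborFinset_self u),
      G.card_neighborFinset_eq_degree, hreg u]
  have hS₁ : #S₁ = D := by
    have : S₁ = G.neighborFinset x₀ := by
      ext v; simp [hS₁_def, SimpleGraph.dist_eq_one_iff_adj]
    rw [this, G.card_neighborFinset_eq_degree, hreg x₀]
  have hsplit₁ := card_filter_add_card_filter_not (s := S₁) (fun v => G.dist u v ≤ 1)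
  have hsplit₂ : #B = ∑ k ∈ range 3, #{v ∈ B | G.dist x₀ v = k} := by
    refine card_eq_sum_card_fiberwise fun v hv => ?_
    have := hconn.dist_triangle (u := x₀) (v := u) (w := v)
    simp only [hB_def, coe_filter, mem_univ, true_and, Set.mem_ofPred_eq] at hv
    simp only [coe_range, Set.mem_Iio]
    omega
  simp only [sum_range_succ, range_zero, sum_empty, zero_add] at hsplit₂
  have e₀ : ({v ∈ B | G.dist x₀ v = 0} : Finset V) = {x₀} := by
    ext v
    simp only [hB_def, mem_filter, mem_univ, true_and, hconn.dist_eq_zero_iff, mem_singleton]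
    constructor
    · exact fun h => h.2.symm
    · rintro rfl; exact ⟨by rw [G.dist_comm, hu], rfl⟩
  have e₁ : ({v ∈ B | G.dist x₀ v = 1} : Finset V) = {v ∈ S₁ | G.dist u v ≤ 1} := by
    ext v; simp only [hB_def, hS₁_def, mem_filter, mem_univ, true_and, and_comm]
  have e₂ : ({v ∈ B | G.dist x₀ v = 2} : Finset V) =
      ({v | G.dist x₀ v = 2 ∧ G.Adj u v} : Finset V) := by
    ext v
    simp only [hB_def, mem_filter, mem_univ, true_and, dist_le_one_iff hconn]
    constructor
    · rintro ⟨rfl | h, h₂⟩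
      · omega
      · exact ⟨h₂, h⟩
    · exact fun h => ⟨Or.inr h.2, h.1⟩
  have e₃ : ({v ∈ S₁ | ¬ G.dist u v ≤ 1} : Finset V) =
      ({v | G.dist x₀ v = 1 ∧ 1 < G.dist u v} : Finset V) := by
    ext v; simp [hS₁_def]
  rw [e₀, e₁, e₂, card_singleton] at hsplit₂
  rw [e₃] at hsplit₁
  omega

/-- Double counting the edges between `{u' ∈ S_1(x₀) | 1 < dist u u'}` and `S_2(x₀) ∩ N(u)`,
two sets of the same size. -/
lemma existsUnique_common_neighbor (hconn : G.Connected) (hreg : G.IsRegularOfDegree D)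
    (hu : G.dist x₀ u = 1) {u' : V} (hu' : G.dist x₀ u' = 1) (huu' : 1 < G.dist u u')
    (hexists : ∀ u', G.dist x₀ u' = 1 → 1 < G.dist u u' →
      ∃ y, G.dist x₀ y = 2 ∧ G.Adj u y ∧ G.Adj u' y)
    (hunique : ∀ y, G.dist x₀ y = 2 → G.Adj u y → ∀ a b, G.dist x₀ a = 1 → G.dist x₀ b = 1 →
      1 < G.dist u a → 1 < G.dist u b → G.Adj a y → G.Adj b y → a = b) :
    ∃! y, G.dist x₀ y = 2 ∧ G.Adj u y ∧ G.Adj u' y := by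
  set s : Finset V := {v | G.dist x₀ v = 1 ∧ 1 < G.dist u v} with hs_def
  set t : Finset V := {y | G.dist x₀ y = 2 ∧ G.Adj u y} with ht_def
  have habove : ∀ a ∈ s, 1 ≤ #(t.bipartiteAbove G.Adj a) := by
    intro a ha
    simp only [hs_def, mem_filter, mem_univ, true_and] at ha
    obtain ⟨y, hy, huy, hay⟩ := hexists a ha.1 ha.2
    exact card_pos.mpr ⟨y, (mem_bipartiteAbove G.Adj).mpr ⟨by simp [ht_def, hy, huy], hay⟩⟩
  have hbelow : ∀ y ∈ t, #(s.bipartiteBelow G.Adj y) ≤ 1 := by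
    intro y hy
    simp only [ht_def, mem_filter, mem_univ, true_and] at hy
    refine card_le_one.mpr fun a ha b hb => ?_
    simp only [mem_bipartiteBelow G.Adj, hs_def, mem_filter, mem_univ, true_and] at ha hb
    exact hunique y hy.1 hy.2 a b ha.1.1 hb.1.1 ha.1.2 hb.1.2 ha.2 hb.2
  have hcard : #t = #s := (card_far_eq_card_out hconn hreg hu).symm
  have hsum : ∑ a ∈ s, 1 = ∑ a ∈ s, #(t.bipartiteAbove G.Adj a) := by
    refine le_antisymm (sum_le_sum habove) ?_
    calc ∑ a ∈ s, #(t.bipartiteAbove G.Adj a)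
        = ∑ y ∈ t, #(s.bipartiteBelow G.Adj y) :=
          sum_card_bipartiteAbove_eq_sum_card_bipartiteBelow _
      _ ≤ ∑ y ∈ t, 1 := sum_le_sum hbelow
      _ = ∑ a ∈ s, 1 := by rw [sum_const, sum_const, hcard]
  have hu's : u' ∈ s := by
    simp only [hs_def, mem_filter, mem_univ, true_and]
    exact ⟨hu', huu'⟩
  obtain ⟨y, hy⟩ := card_eq_one.mp ((sum_eq_sum_iff_of_le habove).mp hsum u' hu's).symm
  have hmem : ∀ z, z ∈ t.bipartiteAbove G.Adj u' ↔ G.dist x₀ z = 2 ∧ G.Adj u z ∧ G.Adj u' z := by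
    intro z
    simp only [mem_bipartiteAbove G.Adj, ht_def, mem_filter, mem_univ, true_and, and_assoc]
  refine ⟨y, (hmem y).mp (hy ▸ mem_singleton_self y), fun z hz => ?_⟩
  have := (hmem z).mpr hz
  rwa [hy, mem_singleton] at this

end Counting

theorem stmt_general [Fintype V] (G : SimpleGraph V) (hconn : G.Connected)
    (D L : ℕ) (hD : 0 < D) (hL : 0 < L) (hreg : G.IsRegularOfDegree D)
    (hBM : BMSharp G D L)
    (x0 : V) (hpole : ∃ p, G.dist x0 p = L)
    (x1 xb1 : V) (hx1 : G.dist x0 x1 = 1) (hxb1 : G.dist x0 xb1 = 1)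
    (hne : x1 ≠ xb1) (hnadj : ¬ G.Adj x1 xb1) :
    ∃! x2 : V, G.dist x0 x2 = 2 ∧ G.Adj x1 x2 ∧ G.Adj xb1 x2 := by
  obtain ⟨p, hp⟩ := hpole
  have hx0x1 : G.Adj x0 x1 := SimpleGraph.dist_eq_one_iff_adj.mp hx1
  have hgeo₀ : G.dist x0 x0 + G.dist x0 p = L := by rw [SimpleGraph.dist_self, zero_add, hp]
  have hgeo₁ : G.dist x0 x1 + G.dist x1 p = L :=
    dist_add_dist_of_adj hconn hreg hBM hD hL hp hgeo₀ hx0x1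
  refine existsUnique_common_neighbor hconn hreg hx1 hxb1
    ((one_lt_dist_iff hconn).mpr ⟨hne, hnadj⟩) (fun u' hu' hfar => ?_)
    (fun y hy hx1y a b ha hb hx1a hx1b hay hby => ?_)
  · exact exists_common_neighbor_of_tight hconn hreg hx1 hu' hfar
      (W1_le_mean_sub_mean hconn hreg hBM hD hL hp hgeo₀ hx0x1 (by rw [hx1, SimpleGraph.dist_self]))
  · exact eq_of_adj_of_tight hconn hreg (by omega) ha hb hx1a hx1b hay hby
      (W1_le_mean_sub_mean hconn hreg hBM hD hL hp hgeo₁ hx1y (by rw [hy, hx1]))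

theorem stmt [Fintype V] (G : SimpleGraph V) (hconn : G.Connected)
    (D L : ℕ) (hD : 0 < D) (hL : 0 < L) (hreg : G.IsRegularOfDegree D)
    (hdiam : G.diam = L) (hBM : BMSharp G D L)
    (x0 : V) (hpole : ∃ p, G.dist x0 p = L)
    (x1 xb1 : V) (hx1 : G.dist x0 x1 = 1) (hxb1 : G.dist x0 xb1 = 1)
    (hne : x1 ≠ xb1) (hnadj : ¬ G.Adj x1 xb1) :
    ∃! x2 : V, G.dist x0 x2 = 2 ∧ G.Adj x1 x2 ∧ G.Adj xb1 x2 :=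
  stmt_general G hconn D L hD hL hreg hBM x0 hpole x1 xb1 hx1 hxb1 hne hnadj

end BMS
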